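/- arXiv:2012.03235 — 6 statements merged into one kernel-verified Lean document; each statement's English description precedes it below -/
import Mathlib

section
/- For every real c > 0 there exist a positive integer n and a union-closed family F ⊆ P({1,…,n}) with F ≠ ∅ and F ≠ {∅} such that the average overlap density of F is strictly less than c. (This disproves the conjecture that average overlap densities of union-closed families are bounded below by an absolute positive constant.) -/
open Finset

/-- A family of finite sets is union-closed if it contains the union of any two of
its members. -/
def UnionClosed {α : Type*} [DecidableEq α] (F : Finset (Finset α)) : Prop :=
  ∀ A ∈ F, ∀ B ∈ F, A ∪ B ∈ F

/-- The abundance of `x` with respect to a family `F`. -/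
noncomputable def abundance {α : Type*} [DecidableEq α] (F : Finset (Finset α)) (x : α) : ℝ :=
  ((F.filter (fun A => x ∈ A)).card : ℝ) / (F.card : ℝ)

/-- The average overlap density of `F`. -/
noncomputable def AOD {α : Type*} [DecidableEq α] (F : Finset (Finset α)) : ℝ :=
  (1 / (((F.erase ∅).card : ℝ))) *
    ∑ A ∈ F.erase ∅, (1 / (A.card : ℝ)) * ∑ x ∈ A, abundance F x

/-!
Put `m` chains side by side: on the block `{t} × Fin N` of the ground set, level `j < L` is the
initial segment `{0, …, j - 1}` and level `L` is the whole block. A choice of levels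
`a : Fin m → Fin (L + 1)` gives a set, and the choices with at least one coordinate at the top form
an up-set of the product lattice, hence a union-closed family. When `N ≫ m L`, almost every element
of a member lies in a full block `t`, and such an element lies only in the members with `a t = L`,
a proportion of at most `2 / (L + 1)` of the family once `L ≤ m`: by Bernoulli's inequality at most
half of all `a` have no top coordinate. So `AOD ≤ m L / N + 2 / (L + 1)`, which is small for
`m = L = q`, `N = q ^ 3`.
-/

section Map

variable {α β : Type*} [DecidableEq α] [DecidableEq β] (e : α ↪ β)

theorem UnionClosed.map {F : Finset (Finset α)} (hF : UnionClosed F) :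
    UnionClosed (F.map (mapEmbedding e).toEmbedding) := by
  simp only [UnionClosed, mem_map, RelEmbedding.coe_toEmbedding, mapEmbedding_apply]
  rintro _ ⟨A, hA, rfl⟩ _ ⟨B, hB, rfl⟩
  exact ⟨A ∪ B, hF A hA B hB, map_union A B⟩

theorem abundance_map (F : Finset (Finset α)) (x : α) :
    abundance (F.map (mapEmbedding e).toEmbedding) (e x) = abundance F x := by
  simp only [abundance, filter_map, card_map]
  congr 4
  ext A
  simp

theorem AOD_map (F : Finset (Finset α)) :
    AOD (F.map (mapEmbedding e).toEmbedding) = AOD F := by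
  have h := map_erase (mapEmbedding e).toEmbedding F ∅
  simp only [RelEmbedding.coe_toEmbedding, mapEmbedding_apply, map_empty] at h
  simp only [AOD, ← h, card_map, sum_map, RelEmbedding.coe_toEmbedding, mapEmbedding_apply,
    abundance_map]

end Map

section Averaging

variable {α : Type*} [DecidableEq α]

theorem abundance_le_one (F : Finset (Finset α)) (x : α) : abundance F x ≤ 1 :=
  div_le_one_of_le₀ (by exact_mod_cast card_filter_le F _) (Nat.cast_nonneg _)

theorem sum_abundance_le_card_filter_add (F : Finset (Finset α)) (A : Finset α) (p : α → Prop)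
    [DecidablePred p] {δ : ℝ} (hδ : 0 ≤ δ) (h : ∀ x ∈ A, ¬ p x → abundance F x ≤ δ) :
    ∑ x ∈ A, abundance F x ≤ #(A.filter p) + δ * #A := by
  rw [← sum_filter_add_sum_filter_not A p]
  gcongr
  · calc ∑ x ∈ A with p x, abundance F x ≤ ∑ x ∈ A with p x, (1 : ℝ) :=
          sum_le_sum fun x _ => abundance_le_one F x
      _ = #(A.filter p) := by simp
  · calc ∑ x ∈ A with ¬ p x, abundance F x ≤ ∑ x ∈ A with ¬ p x, δ :=
          sum_le_sum fun x hx => h x (mem_filter.1 hx).1 (mem_filter.1 hx).2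
      _ = δ * #(A.filter (¬ p ·)) := by rw [sum_const, nsmul_eq_mul, mul_comm]
      _ ≤ δ * #A := by gcongr; exact filter_subset _ _

theorem AOD_le_of_forall_le (F : Finset (Finset α)) {ε : ℝ} (hε : 0 ≤ ε)
    (h : ∀ A ∈ F, A ≠ ∅ → (1 / (#A : ℝ)) * ∑ x ∈ A, abundance F x ≤ ε) :
    AOD F ≤ ε := by
  rw [AOD]
  rcases (F.erase ∅).eq_empty_or_nonempty with hF | hF
  · simp [hF, hε]
  rw [one_div_mul_eq_div, div_le_iff₀ (by exact_mod_cast hF.card_pos), mul_comm,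
    ← nsmul_eq_mul]
  exact sum_le_card_nsmul _ _ _ fun A hA => h A (mem_of_mem_erase hA) (ne_of_mem_erase hA)

end Averaging

theorem two_mul_pow_le_add_one_pow {L m : ℕ} (hL : 1 ≤ L) (hLm : L ≤ m) :
    2 * L ^ m ≤ (L + 1) ^ m := by
  have hL' : (0 : ℝ) < L := by exact_mod_cast hL
  have h1 : (1 : ℝ) ≤ m * (L : ℝ)⁻¹ := by
    rw [← div_eq_mul_inv, one_le_div₀ hL']
    exact_mod_cast hLm
  have bernoulli := one_add_mul_le_pow (a := (L : ℝ)⁻¹) (by linarith [inv_pos.2 hL']) m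
  have key : (2 : ℝ) * L ^ m ≤ (L + 1) ^ m :=
    calc (2 : ℝ) * L ^ m ≤ (1 + m * (L : ℝ)⁻¹) * L ^ m := by gcongr; linarith
      _ ≤ (1 + (L : ℝ)⁻¹) ^ m * L ^ m := by gcongr
      _ = (L + 1) ^ m := by rw [← mul_pow]; congr 1; field_simp
  exact_mod_cast key

namespace ChainProduct

variable {m L : ℕ} (N : ℕ)

def levelSet (a : Fin m → Fin (L + 1)) : Finset (Fin m × Fin N) :=
  {x | (x.2 : ℕ) < a x.1 ∨ a x.1 = Fin.last L}

variable (m L) in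
def topped : Finset (Fin m → Fin (L + 1)) := {a | ∃ t, a t = Fin.last L}

variable (m L) in
def family : Finset (Finset (Fin m × Fin N)) := (topped m L).image (levelSet N)

variable {N}

theorem mem_levelSet {a : Fin m → Fin (L + 1)} {x : Fin m × Fin N} :
    x ∈ levelSet N a ↔ (x.2 : ℕ) < a x.1 ∨ a x.1 = Fin.last L := by
  simp [levelSet]

theorem levelSet_sup (a b : Fin m → Fin (L + 1)) :
    levelSet N (a ⊔ b) = levelSet N a ∪ levelSet N b := by
  ext x
  simp only [mem_union, mem_levelSet, Pi.sup_apply, Fin.ext_iff, Fin.coe_max, Fin.val_last]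
  omega

theorem levelSet_injective (hLN : L ≤ N) : Function.Injective (levelSet N (m := m) (L := L)) := by
  suffices h : ∀ a b : Fin m → Fin (L + 1), ∀ t, a t < b t → levelSet N a ≠ levelSet N b by
    intro a b hab
    funext t
    by_contra hne
    rcases lt_or_gt_of_ne hne with hlt | hlt
    exacts [h a b t hlt hab, h b a t hlt hab.symm]
  intro a b t hlt hab
  have hN : (a t : ℕ) < N := by omega
  have hmem := congrArg ((t, ⟨a t, hN⟩) ∈ ·) hab
  simp only [mem_levelSet, lt_self_iff_false, false_or, eq_iff_iff] at hmem
  exact (Fin.le_last (b t)).not_gt (hmem.2 (Or.inl hlt) ▸ hlt)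

theorem sup_mem_topped {a : Fin m → Fin (L + 1)} (ha : a ∈ topped m L) (b : Fin m → Fin (L + 1)) :
    a ⊔ b ∈ topped m L := by
  simp only [topped, mem_filter, mem_univ, true_and] at ha ⊢
  obtain ⟨t, ht⟩ := ha
  exact ⟨t, by simp [ht, Fin.le_last]⟩

theorem unionClosed_family : UnionClosed (family m L N) := by
  simp only [UnionClosed, family, mem_image]
  rintro _ ⟨a, ha, rfl⟩ _ ⟨b, -, rfl⟩
  exact ⟨a ⊔ b, sup_mem_topped ha b, levelSet_sup a b⟩

theorem card_topped_add : #(topped m L) + L ^ m = (L + 1) ^ m := by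
  have h : topped m L = (Fintype.piFinset fun _ => univ.erase (Fin.last L))ᶜ := by
    ext a; simp [topped]
  rw [h, card_compl, Fintype.card_piFinset]
  simp only [mem_univ, card_erase_of_mem, card_univ, Fintype.card_fin, Fintype.card_pi,
    prod_const, add_tsub_cancel_right]
  exact Nat.sub_add_cancel (Nat.pow_le_pow_left (Nat.le_succ L) m)

theorem le_card_levelSet {a : Fin m → Fin (L + 1)} (ha : a ∈ topped m L) :
    N ≤ #(levelSet N a) := by
  obtain ⟨t, ht⟩ := (mem_filter.1 ha).2
  calc N = #({t} ×ˢ (univ : Finset (Fin N))) := by simp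
    _ ≤ #(levelSet N a) := card_le_card fun x hx => by
        rw [mem_product, mem_singleton] at hx
        simp [mem_levelSet, hx.1, ht]

theorem card_filter_levelSet_le (a : Fin m → Fin (L + 1)) :
    #((levelSet N a).filter fun x => (x.2 : ℕ) < L) ≤ m * L := by
  calc #((levelSet N a).filter fun x => (x.2 : ℕ) < L)
      ≤ #((univ : Finset (Fin m)) ×ˢ (univ.filter fun u : Fin N => (u : ℕ) < L)) :=
        card_le_card fun x hx => by simp [(mem_filter.1 hx).2]
    _ ≤ m * L := by
        rw [card_product, card_univ, Fintype.card_fin]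
        gcongr
        exact Fin.card_filter_val_lt.trans_le (min_le_right _ _)

theorem card_family (hLN : L ≤ N) : #(family m L N) = #(topped m L) :=
  card_image_of_injective _ (levelSet_injective hLN)

theorem card_filter_mem_family_le {x : Fin m × Fin N} (hx : L ≤ (x.2 : ℕ)) :
    #((family m L N).filter (x ∈ ·)) ≤ (L + 1) ^ (m - 1) := by
  have hsub : (topped m L).filter (x ∈ levelSet N ·) ⊆
      (Fintype.piFinset fun _ => univ).filter (· x.1 = Fin.last L) := fun b hb => by
    have hxb := (mem_filter.1 hb).2
    simp only [mem_levelSet] at hxb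
    simp only [mem_filter, Fintype.mem_piFinset, mem_univ, implies_true, true_and]
    omega
  calc #((family m L N).filter (x ∈ ·))
      = #(((topped m L).filter (x ∈ levelSet N ·)).image (levelSet N)) := by
        rw [family, filter_image]
    _ ≤ #((topped m L).filter (x ∈ levelSet N ·)) := card_image_le
    _ ≤ #((Fintype.piFinset fun _ => univ).filter (· x.1 = Fin.last L)) := card_le_card hsub
    _ = (L + 1) ^ (m - 1) := by
        rw [Fintype.card_filter_piFinset_const_eq_of_mem _ _ (mem_univ _), card_univ,
          Fintype.card_fin, Fintype.card_fin]

theorem family_nonempty (hm : 0 < m) : (family m L N).Nonempty :=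
  ⟨_, mem_image_of_mem (levelSet N) (a := fun _ => Fin.last L)
    (mem_filter.2 ⟨mem_univ _, ⟨0, hm⟩, rfl⟩)⟩

theorem abundance_family_le (hL : 1 ≤ L) (hLm : L ≤ m) (hLN : L ≤ N) {x : Fin m × Fin N}
    (hx : L ≤ (x.2 : ℕ)) : abundance (family m L N) x ≤ 2 / (L + 1) := by
  have hcount : (L + 1) * #((family m L N).filter (x ∈ ·)) ≤ 2 * #(family m L N) := by
    have hbernoulli := two_mul_pow_le_add_one_pow hL hLm
    have hsplit := card_topped_add (m := m) (L := L)
    calc (L + 1) * #((family m L N).filter (x ∈ ·)) ≤ (L + 1) * (L + 1) ^ (m - 1) :=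
          Nat.mul_le_mul_left _ (card_filter_mem_family_le hx)
      _ = (L + 1) ^ m := by rw [mul_comm, pow_sub_one_mul (by omega)]
      _ ≤ 2 * #(family m L N) := by rw [card_family hLN]; omega
  have hpos : 0 < #(family m L N) := (family_nonempty (by omega)).card_pos
  rw [abundance, div_le_div_iff₀ (by exact_mod_cast hpos) (by positivity)]
  exact_mod_cast (mul_comm _ _).trans_le hcount

theorem AOD_family_le (hL : 1 ≤ L) (hLm : L ≤ m) (hLN : L ≤ N) :
    AOD (family m L N) ≤ m * L / N + 2 / (L + 1) := by
  refine AOD_le_of_forall_le _ (by positivity) fun A hA _ => ?_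
  obtain ⟨a, ha, rfl⟩ := mem_image.1 hA
  have hN : (0 : ℝ) < N := by exact_mod_cast (hL.trans hLN)
  have hcard : (N : ℝ) ≤ #(levelSet N a) := by exact_mod_cast le_card_levelSet ha
  have hA : (#(levelSet N a) : ℝ) ≠ 0 := (hN.trans_le hcard).ne'
  have hsum := sum_abundance_le_card_filter_add (family m L N) (levelSet N a)
    (fun x => (x.2 : ℕ) < L) (δ := 2 / (L + 1)) (by positivity)
    fun x _ hx => abundance_family_le hL hLm hLN (not_lt.1 hx)
  have hlight : (#((levelSet N a).filter fun x => (x.2 : ℕ) < L) : ℝ) ≤ m * L := by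
    exact_mod_cast card_filter_levelSet_le a
  calc 1 / (#(levelSet N a) : ℝ) * ∑ x ∈ levelSet N a, abundance (family m L N) x
      ≤ 1 / (#(levelSet N a) : ℝ) * (m * L + 2 / (L + 1) * #(levelSet N a)) := by
        gcongr; linarith
    _ = m * L / #(levelSet N a) + 2 / (L + 1) := by field_simp
    _ ≤ m * L / N + 2 / (L + 1) := by gcongr

theorem empty_notMem_family (hN : 0 < N) : ∅ ∉ family m L N := fun h => by
  obtain ⟨a, ha, hempty⟩ := mem_image.1 h
  have := le_card_levelSet (N := N) ha
  rw [hempty, card_empty] at this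
  omega

end ChainProduct

open ChainProduct in
/-- For every `c > 0` there is a union-closed family `F ⊆ P({1,…,n})`,
with `F ≠ ∅` and `F ≠ {∅}`, whose average overlap density is less than `c`. -/
theorem exists_unionClosed_AOD_lt (c : ℝ) (hc : 0 < c) :
    ∃ n : ℕ, 0 < n ∧
      ∃ F : Finset (Finset (Fin n)), UnionClosed F ∧ F.Nonempty ∧ F ≠ {∅} ∧ AOD F < c := by
  obtain ⟨q, hq⟩ := exists_nat_gt (3 / c)
  have hqR : (0 : ℝ) < q := (div_pos three_pos hc).trans hq
  have hq0 : 0 < q := by exact_mod_cast hqR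
  have hbound : (q * q : ℝ) / (q ^ 3 : ℕ) + 2 / (q + 1) < c := by
    have h1 : (q * q : ℝ) / (q ^ 3 : ℕ) = 1 / q := by push_cast; field_simp
    have h2 : 2 / (q + 1 : ℝ) ≤ 2 / q := by gcongr; linarith
    have h3 : 3 / (q : ℝ) < c := by rwa [div_lt_iff₀ hqR, mul_comm, ← div_lt_iff₀ hc]
    linarith [show (1 : ℝ) / q + 2 / q = 3 / q by ring]
  let e : Fin q × Fin (q ^ 3) ↪ Fin (q * q ^ 3) := finProdFinEquiv.toEmbedding
  have hempty := empty_notMem_family (m := q) (L := q) (pow_pos hq0 3)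
  refine ⟨q * q ^ 3, by positivity, (family q q (q ^ 3)).map (mapEmbedding e).toEmbedding,
    unionClosed_family.map e, (family_nonempty hq0).map, fun h => hempty ?_, ?_⟩
  · have hmem : ∅ ∈ (family q q (q ^ 3)).map (mapEmbedding e).toEmbedding := by
      rw [h]; exact mem_singleton_self ∅
    simpa using hmem
  · rw [AOD_map]
    exact (AOD_family_le hq0 le_rfl (Nat.le_self_pow (by norm_num) q)).trans_lt hbound
end

section
/- In the block construction, for each j ∈ [m] the number N_j of sets in F that contain exactly j of the blocks B_1,…,B_m satisfies N_j = C(m, j) · 2^{(m−j)s}, where C(m,j) is the binomial coefficient. -/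
open Finset

/-- The union-closed family generated by `G = {B i ∪ {j} : i, j ∈ T}`:
all unions of nonempty subcollections of `G`. -/
def blockFamily {n m : ℕ} (B : Fin m → Finset (Fin n)) (T : Finset (Fin n)) :
    Finset (Finset (Fin n)) :=
  ((((univ : Finset (Fin m)) ×ˢ T).image (fun p => B p.1 ∪ {p.2})).powerset.filter
      (fun C => C.Nonempty)).image (fun C => C.sup id)

/-! Every member of the family is `⋃_{i ∈ S} B i ∪ U` with `S ≠ ∅` and `U ⊆ ⋃ᵢ T i`; discarding
the points of `U` already covered puts it in the normal form `U ⊆ ⋃_{i ∉ S} T i`. The normal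
form is unique: since each `T l` is a proper subset of `B l` and the blocks are disjoint, no
block `B l` with `l ∉ S` is covered, so `S` is exactly the set of blocks contained in the
member. Hence the members with exactly `j` blocks are counted by the pairs `(S, U)` with
`|S| = j` and `U ⊆ ⋃_{i ∉ S} T i`, that is `C(m, j) · 2 ^ ((m - j) s)` of them. -/

open Function

section Blocks

variable {ι α : Type*} [DecidableEq ι] [DecidableEq α] {B T : ι → Finset α}

theorem not_subset_biUnion_of_ssubset (hB : Pairwise (Disjoint on B)) (hT : ∀ i, T i ⊂ B i)
    (t : Finset ι) (i : ι) : ¬ B i ⊆ t.biUnion T := by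
  intro hi
  obtain ⟨x, hxB, hxT⟩ := exists_of_ssubset (hT i)
  obtain ⟨l, -, hxl⟩ := mem_biUnion.1 (hi hxB)
  obtain rfl : l = i := by
    by_contra hne
    exact disjoint_left.1 (hB hne) ((hT l).subset hxl) hxB
  exact hxT hxl

variable [Fintype ι]

theorem filter_subset_biUnion_union_eq (hB : Pairwise (Disjoint on B)) (hT : ∀ i, T i ⊂ B i)
    {S t : Finset ι} {U : Finset α} (hU : U ⊆ t.biUnion T) :
    univ.filter (fun i => B i ⊆ S.biUnion B ∪ U) = S := by
  ext i
  simp only [mem_filter, mem_univ, true_and]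
  refine ⟨fun hi => ?_, fun hi => (subset_biUnion_of_mem B hi).trans subset_union_left⟩
  by_contra hiS
  have hdisj : Disjoint (B i) (S.biUnion B) :=
    (disjoint_biUnion_right _ _ _).2 fun l hl => hB (ne_of_mem_of_not_mem hl hiS).symm
  exact not_subset_biUnion_of_ssubset hB hT t i ((hdisj.left_le_of_le_sup_left hi).trans hU)

theorem disjoint_biUnion_compl_biUnion (hB : Pairwise (Disjoint on B)) (hT : ∀ i, T i ⊆ B i)
    (S : Finset ι) : Disjoint (S.biUnion B) ((univ \ S).biUnion T) := by
  simp only [disjoint_biUnion_left, disjoint_biUnion_right, mem_sdiff, mem_univ, true_and]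
  exact fun i hi l hl => (hB (ne_of_mem_of_not_mem hl hi)).mono_right (hT i)

theorem injOn_biUnion_union (hB : Pairwise (Disjoint on B)) (hT : ∀ i, T i ⊂ B i)
    (𝒮 : Finset (Finset ι)) :
    Set.InjOn (fun p : (_ : Finset ι) × Finset α => p.1.biUnion B ∪ p.2)
      (𝒮.sigma fun S => ((univ \ S).biUnion T).powerset) := by
  rintro ⟨S₁, U₁⟩ h₁ ⟨S₂, U₂⟩ h₂ h
  simp only [coe_sigma, Set.mem_sigma_iff, mem_coe, mem_powerset] at h₁ h₂ h
  obtain rfl : S₁ = S₂ := by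
    rw [← filter_subset_biUnion_union_eq hB hT (S := S₁) h₁.2, h,
      filter_subset_biUnion_union_eq hB hT h₂.2]
  have hdisj := disjoint_biUnion_compl_biUnion hB (fun i => (hT i).subset) S₁
  rw [← union_sdiff_cancel_left (hdisj.mono_right h₁.2),
    ← union_sdiff_cancel_left (hdisj.mono_right h₂.2), h]

theorem card_biUnion_compl (hT : Pairwise (Disjoint on T)) {s : ℕ} (hTcard : ∀ i, #(T i) = s)
    (S : Finset ι) : #((univ \ S).biUnion T) = (Fintype.card ι - #S) * s := by
  rw [card_biUnion (hT.set_pairwise _), sum_const_nat fun i _ => hTcard i, card_univ_sdiff]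

end Blocks

section BlockFamily

variable {n m : ℕ} {B : Fin m → Finset (Fin n)}

theorem sup_image_union_singleton (P : Finset (Fin m × Fin n)) :
    (P.image fun p => B p.1 ∪ {p.2}).sup id = (P.image Prod.fst).biUnion B ∪ P.image Prod.snd := by
  rw [sup_image, id_comp]
  show P.sup ((B ∘ Prod.fst) ⊔ (singleton ∘ Prod.snd)) = _
  rw [sup_sup, ← sup_image, ← sup_image, sup_eq_biUnion, sup_singleton_eq_self, sup_eq_union]

theorem mem_blockFamily {T A : Finset (Fin n)} :
    A ∈ blockFamily B T ↔ ∃ S : Finset (Fin m), ∃ U : Finset (Fin n),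
      S.Nonempty ∧ U.Nonempty ∧ U ⊆ T ∧ S.biUnion B ∪ U = A := by
  simp only [blockFamily, mem_image, mem_filter, mem_powerset, subset_image_iff]
  constructor
  · rintro ⟨_, ⟨⟨P, hP, rfl⟩, hne⟩, rfl⟩
    have hP_ne := image_nonempty.1 hne
    exact ⟨_, _, hP_ne.image _, hP_ne.image _,
      (image_subset_image hP).trans subset_product_image_snd, (sup_image_union_singleton P).symm⟩
  · rintro ⟨S, U, hS, hU, hUT, rfl⟩
    refine ⟨_, ⟨⟨S ×ˢ U, product_subset_product (subset_univ S) hUT, rfl⟩,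
      (hS.product hU).image _⟩, ?_⟩
    rw [sup_image_union_singleton, product_image_fst hU, product_image_snd hS]

variable {T : Fin m → Finset (Fin n)}

theorem mem_blockFamily_biUnion (hT : ∀ i, T i ⊆ B i) (hTne : ∀ i, (T i).Nonempty)
    {A : Finset (Fin n)} :
    A ∈ blockFamily B (univ.biUnion T) ↔
      ∃ S : Finset (Fin m), S.Nonempty ∧ ∃ U ⊆ (univ \ S).biUnion T, S.biUnion B ∪ U = A := by
  rw [mem_blockFamily]
  constructor
  · rintro ⟨S, U, hS, -, hUT, rfl⟩
    refine ⟨S, hS, U \ S.biUnion B, fun x hx => ?_, union_sdiff_self_eq_union⟩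
    rw [mem_sdiff] at hx
    obtain ⟨i, -, hxi⟩ := mem_biUnion.1 (hUT hx.1)
    exact mem_biUnion.2
      ⟨i, mem_sdiff.2 ⟨mem_univ i, fun hi => hx.2 (mem_biUnion.2 ⟨i, hi, hT i hxi⟩)⟩, hxi⟩
  · rintro ⟨S, ⟨i, hi⟩, U, hU, rfl⟩
    -- `T i ⊆ B i` is already covered, so adjoining it makes the `T`-part nonempty for free.
    refine ⟨S, U ∪ T i, ⟨i, hi⟩, (hTne i).mono subset_union_right,
      union_subset (hU.trans (biUnion_subset_biUnion_of_subset_left _ (subset_univ _)))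
        (subset_biUnion_of_mem T (mem_univ i)), ?_⟩
    rw [union_comm U, ← union_assoc, union_eq_left.2 ((hT i).trans (subset_biUnion_of_mem B hi))]

theorem filter_blockFamily_card_blocks_eq_image (hB : Pairwise (Disjoint on B))
    (hT : ∀ i, T i ⊂ B i) (hTne : ∀ i, (T i).Nonempty) {j : ℕ} (hj : 1 ≤ j) :
    (blockFamily B (univ.biUnion T)).filter (fun A => #(univ.filter fun i => B i ⊆ A) = j) =
      ((powersetCard j univ).sigma fun S => ((univ \ S).biUnion T).powerset).image
        fun p => p.1.biUnion B ∪ p.2 := by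
  ext A
  simp only [mem_filter, mem_image, mem_sigma, mem_powersetCard_univ, mem_powerset,
    mem_blockFamily_biUnion (fun i => (hT i).subset) hTne]
  constructor
  · rintro ⟨⟨S, -, U, hU, rfl⟩, hj⟩
    rw [filter_subset_biUnion_union_eq hB hT hU] at hj
    exact ⟨⟨S, U⟩, ⟨hj, hU⟩, rfl⟩
  · rintro ⟨⟨S, U⟩, ⟨hS, hU⟩, rfl⟩
    dsimp only at hS hU ⊢
    exact ⟨⟨S, card_pos.1 (by omega), U, hU, rfl⟩, by rwa [filter_subset_biUnion_union_eq hB hT hU]⟩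

end BlockFamily

theorem blockFamily_count_exactly_j_blocks_general
    (k m s : ℕ) (hs : 0 < s) (hsk : s + 2 ≤ k)
    (B : Fin m → Finset (Fin (k * m)))
    (hBcard : ∀ i, (B i).card = k)
    (hBdisj : ∀ i j : Fin m, i ≠ j → Disjoint (B i) (B j))
    (T : Fin m → Finset (Fin (k * m)))
    (hT : ∀ i, T i ⊆ B i) (hTcard : ∀ i, (T i).card = s)
    :
    ∀ j : ℕ, 1 ≤ j → j ≤ m →
      ((blockFamily B ((univ : Finset (Fin m)).biUnion T)).filter
          (fun A => (univ.filter (fun i : Fin m => B i ⊆ A)).card = j)).card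
        = m.choose j * 2 ^ ((m - j) * s) := by
  intro j hj _
  have hB : Pairwise (Disjoint on B) := fun i l => hBdisj i l
  have hTB : ∀ i, T i ⊂ B i := fun i =>
    (hT i).ssubset_of_ne fun h => by have := hBcard i; rw [← h, hTcard] at this; omega
  have hTne : ∀ i, (T i).Nonempty := fun i => card_pos.1 (hTcard i ▸ hs)
  rw [filter_blockFamily_card_blocks_eq_image hB hTB hTne hj,
    card_image_of_injOn (injOn_biUnion_union hB hTB _), card_sigma]
  calc ∑ S ∈ powersetCard j univ, #((univ \ S).biUnion T).powerset
      = ∑ S ∈ powersetCard j univ, 2 ^ ((m - j) * s) := sum_congr rfl fun S hS => by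
        rw [card_powerset, card_biUnion_compl (hB.mono fun _ _ h => h.mono (hT _) (hT _)) hTcard,
          Fintype.card_fin, mem_powersetCard_univ.1 hS]
    _ = m.choose j * 2 ^ ((m - j) * s) := by
        rw [sum_const, card_powersetCard, card_univ, Fintype.card_fin, smul_eq_mul]

/-- In the block construction, the number of sets of `F` containing exactly
`j` of the blocks is `C(m, j) · 2^{(m−j)s}`. -/
theorem blockFamily_count_exactly_j_blocks
    (k m s : ℕ) (hk : 0 < k) (hm : 2 ≤ m) (hs : 0 < s) (hsk : s + 2 ≤ k)
    (B : Fin m → Finset (Fin (k * m)))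
    (hBcard : ∀ i, (B i).card = k)
    (hBdisj : ∀ i j : Fin m, i ≠ j → Disjoint (B i) (B j))
    (hBcover : (Finset.univ : Finset (Fin m)).biUnion B = (Finset.univ : Finset (Fin (k * m))))
    (T : Fin m → Finset (Fin (k * m)))
    (hT : ∀ i, T i ⊆ B i) (hTcard : ∀ i, (T i).card = s)
    :
    ∀ j : ℕ, 1 ≤ j → j ≤ m →
      ((blockFamily B ((univ : Finset (Fin m)).biUnion T)).filter
          (fun A => (univ.filter (fun i : Fin m => B i ⊆ A)).card = j)).card
        = m.choose j * 2 ^ ((m - j) * s) :=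
  blockFamily_count_exactly_j_blocks_general k m s hs hsk B hBcard hBdisj T hT hTcard
end

section
/- In the block construction, for every x ∈ [n] ∖ T, the abundance of x satisfies γ_x = (1/m) · Σ_{j=1}^{m} j · p_j, where p_j = N_j/|F| is the probability that a uniformly random member of F contains exactly j blocks. -/
open Finset

/-! Every member of the family is `⋃ i ∈ S, B i ∪ U` for a nonempty set `S` of blocks and a set
`U ⊆ T` avoiding those blocks, and `S` is recovered as the set of blocks the member contains
because `T i ⊊ B i`. So exactly `2 ^ (s * (m - #S))` members have block set `S`, a number depending
only on `#S`; hence the number of members containing a given block does not depend on the block.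
For `x ∈ B i ∖ T` a member contains `x` iff it contains `B i`, and double counting the pairs
(member, block contained in it) gives `∑ j, j * N j = m * #{A ∈ F | x ∈ A}`. -/

theorem Finset.sum_filter_mem_card_eq {α M : Type*} [Fintype α] [DecidableEq α]
    [AddCommMonoid M] (g : ℕ → M) (i j : α) :
    ∑ S ∈ univ.filter (i ∈ ·), g #S = ∑ S ∈ univ.filter (j ∈ ·), g #S := by
  refine sum_equiv (Equiv.swap i j).finsetCongr (fun S => ?_) (fun S _ => ?_)
  · simp [mem_map_equiv]
  · simp

theorem Finset.sum_card_eq_of_card_filter_mem {α β : Type*} [Fintype α] [DecidableEq α]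
    {s : Finset β} {f : β → Finset α} {c : ℕ} (h : ∀ a, #{b ∈ s | a ∈ f b} = c) :
    ∑ b ∈ s, #(f b) = Fintype.card α * c := by
  calc ∑ b ∈ s, #(f b) = ∑ b ∈ s, ∑ a, if a ∈ f b then 1 else 0 := by simp
    _ = ∑ a, #{b ∈ s | a ∈ f b} := by rw [sum_comm]; simp
    _ = Fintype.card α * c := by simp [h]

theorem Finset.sum_mul_card_filter_eq_sum {β : Type*} {s : Finset β} {f : β → ℕ} {t : Finset ℕ}
    (h : ∀ b ∈ s, f b ∈ t) : ∑ j ∈ t, j * #{b ∈ s | f b = j} = ∑ b ∈ s, f b := by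
  rw [← sum_fiberwise_of_maps_to h]
  refine sum_congr rfl fun j _ => ?_
  rw [sum_congr rfl fun b hb => (mem_filter.mp hb).2, sum_const, smul_eq_mul, mul_comm]

namespace BlockFamily

open Function

variable {n m : ℕ} {B T : Fin m → Finset (Fin n)} {D A : Finset (Fin n)}

def blocksIn (B : Fin m → Finset (Fin n)) (A : Finset (Fin n)) : Finset (Fin m) :=
  univ.filter fun i => B i ⊆ A

theorem mem_blockFamily :
    A ∈ blockFamily B D ↔ ∃ P ⊆ univ ×ˢ D, P.Nonempty ∧ P.sup (fun p => B p.1 ∪ {p.2}) = A := by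
  simp only [blockFamily, mem_image, mem_filter, mem_powerset, subset_image_iff]
  constructor
  · rintro ⟨_, ⟨⟨P, hP, rfl⟩, hne⟩, rfl⟩
    exact ⟨P, hP, hne.of_image, by rw [sup_image]; rfl⟩
  · rintro ⟨P, hP, hne, rfl⟩
    exact ⟨_, ⟨⟨P, hP, rfl⟩, hne.image _⟩, by rw [sup_image]; rfl⟩

theorem blocksIn_nonempty (hA : A ∈ blockFamily B D) : (blocksIn B A).Nonempty := by
  obtain ⟨P, -, ⟨p, hp⟩, rfl⟩ := mem_blockFamily.mp hA
  exact ⟨p.1, mem_filter.mpr ⟨mem_univ _, subset_union_left.trans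
    (le_sup (f := fun p : Fin m × Fin n => B p.1 ∪ {p.2}) hp)⟩⟩

theorem biUnion_blocksIn_union_inter (hA : A ∈ blockFamily B D) :
    (blocksIn B A).biUnion B ∪ (A ∩ D) = A := by
  refine Subset.antisymm (union_subset ?_ inter_subset_left) fun x hx => ?_
  · exact biUnion_subset.mpr fun i hi => (mem_filter.mp hi).2
  obtain ⟨P, hPD, -, rfl⟩ := mem_blockFamily.mp hA
  obtain ⟨p, hp, hxp⟩ := mem_sup.mp hx
  have hpA : B p.1 ∪ {p.2} ⊆ P.sup (fun p => B p.1 ∪ {p.2}) :=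
    le_sup (f := fun p : Fin m × Fin n => B p.1 ∪ {p.2}) hp
  rcases mem_union.mp hxp with hxB | hxt
  · exact mem_union_left _ (mem_biUnion.mpr
      ⟨p.1, mem_filter.mpr ⟨mem_univ _, subset_union_left.trans hpA⟩, hxB⟩)
  · rw [mem_singleton.mp hxt]
    exact mem_union_right _ (mem_inter.mpr ⟨hpA (by simp), (mem_product.mp (hPD hp)).2⟩)

theorem biUnion_union_mem_blockFamily (hD : ∀ i, (B i ∩ D).Nonempty) {S : Finset (Fin m)}
    (hS : S.Nonempty) {U : Finset (Fin n)} (hU : U ⊆ D) :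
    S.biUnion B ∪ U ∈ blockFamily B D := by
  choose t ht using hD
  obtain ⟨i₀, hi₀⟩ := hS
  refine mem_blockFamily.mpr ⟨S.image (fun i => (i, t i)) ∪ U.image (i₀, ·), ?_, ?_, ?_⟩
  · intro p hp
    simp only [mem_union, mem_image] at hp
    rcases hp with ⟨i, -, rfl⟩ | ⟨u, hu, rfl⟩
    · exact mem_product.mpr ⟨mem_univ _, (mem_inter.mp (ht i)).2⟩
    · exact mem_product.mpr ⟨mem_univ _, hU hu⟩
  · exact ⟨_, mem_union_left _ (mem_image_of_mem _ hi₀)⟩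
  · ext x
    simp only [mem_sup, mem_union, mem_image, mem_biUnion, mem_singleton]
    constructor
    · rintro ⟨_, ⟨i, hi, rfl⟩ | ⟨u, hu, rfl⟩, hx | rfl⟩
      exacts [Or.inl ⟨i, hi, hx⟩, Or.inl ⟨i, hi, (mem_inter.mp (ht i)).1⟩,
        Or.inl ⟨i₀, hi₀, hx⟩, Or.inr hu]
    · rintro (⟨i, hi, hx⟩ | hx)
      exacts [⟨_, Or.inl ⟨i, hi, rfl⟩, Or.inl hx⟩, ⟨_, Or.inr ⟨x, hx, rfl⟩, Or.inr rfl⟩]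

theorem mem_biUnion_iff_of_mem (hB : Pairwise (Disjoint on B)) {S : Finset (Fin m)} {i : Fin m}
    {x : Fin n} (hx : x ∈ B i) :
    x ∈ S.biUnion B ↔ i ∈ S := by
  refine ⟨fun h => ?_, fun hi => mem_biUnion.mpr ⟨i, hi, hx⟩⟩
  obtain ⟨j, hj, hxj⟩ := mem_biUnion.mp h
  obtain rfl : i = j := by_contra fun hij => disjoint_left.mp (hB hij) hx hxj
  exact hj

theorem inter_biUnion_eq (hB : Pairwise (Disjoint on B)) (hT : ∀ i, T i ⊆ B i) (i : Fin m) :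
    B i ∩ univ.biUnion T = T i := by
  ext x
  simp only [mem_inter, mem_biUnion, mem_univ, true_and]
  refine ⟨fun ⟨hxB, j, hxj⟩ => ?_, fun hx => ⟨hT i hx, i, hx⟩⟩
  obtain rfl : i = j := by_contra fun hij => disjoint_left.mp (hB hij) hxB (hT j hxj)
  exact hxj

theorem sdiff_biUnion_eq (hB : Pairwise (Disjoint on B)) (hT : ∀ i, T i ⊆ B i)
    (S : Finset (Fin m)) :
    univ.biUnion T \ S.biUnion B = Sᶜ.biUnion T := by
  ext x
  simp only [mem_sdiff, mem_biUnion, mem_univ, true_and, mem_compl]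
  constructor
  · rintro ⟨⟨i, hxi⟩, hxS⟩
    exact ⟨i, fun hi => hxS ⟨i, hi, hT i hxi⟩, hxi⟩
  · rintro ⟨i, hi, hxi⟩
    exact ⟨⟨i, hxi⟩, fun h => hi ((mem_biUnion_iff_of_mem hB (hT i hxi)).mp (mem_biUnion.mpr h))⟩

theorem blocksIn_biUnion_union (hB : Pairwise (Disjoint on B)) (hTB : ∀ i, T i ⊂ B i)
    (S : Finset (Fin m)) {U : Finset (Fin n)} (hU : U ⊆ univ.biUnion T) :
    blocksIn B (S.biUnion B ∪ U) = S := by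
  ext i
  refine ⟨fun hi => by_contra fun hiS => ?_, fun hi => ?_⟩
  · have hBT : B i ⊆ T i := fun x hx => by
      have hxU : x ∈ U := ((mem_union.mp ((mem_filter.mp hi).2 hx)).resolve_left
        fun h => hiS ((mem_biUnion_iff_of_mem hB hx).mp h))
      rw [← inter_biUnion_eq hB (fun j => (hTB j).subset) i]
      exact mem_inter.mpr ⟨hx, hU hxU⟩
    exact (hTB i).not_subset hBT
  · exact mem_filter.mpr ⟨mem_univ _, (subset_biUnion_of_mem B hi).trans subset_union_left⟩

theorem filter_blocksIn_eq (hB : Pairwise (Disjoint on B)) (hTB : ∀ i, T i ⊂ B i)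
    (hTne : ∀ i, (T i).Nonempty) {S : Finset (Fin m)} (hS : S.Nonempty) :
    {A ∈ blockFamily B (univ.biUnion T) | blocksIn B A = S}
      = (Sᶜ.biUnion T).powerset.image (S.biUnion B ∪ ·) := by
  have hT : ∀ i, T i ⊆ B i := fun i => (hTB i).subset
  ext A
  simp only [mem_filter, mem_image, mem_powerset, ← sdiff_biUnion_eq hB hT]
  constructor
  · rintro ⟨hA, rfl⟩
    refine ⟨(A ∩ univ.biUnion T) \ (blocksIn B A).biUnion B,
      sdiff_subset_sdiff inter_subset_right subset_rfl, ?_⟩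
    rw [union_sdiff_self_eq_union, biUnion_blocksIn_union_inter hA]
  · rintro ⟨U, hU, rfl⟩
    have hU' : U ⊆ univ.biUnion T := hU.trans sdiff_subset
    refine ⟨biUnion_union_mem_blockFamily (fun i => ?_) hS hU',
      blocksIn_biUnion_union hB hTB S hU'⟩
    rw [inter_biUnion_eq hB hT]
    exact hTne i

theorem card_filter_blocksIn_eq (hB : Pairwise (Disjoint on B)) (hTB : ∀ i, T i ⊂ B i)
    (hTne : ∀ i, (T i).Nonempty) {S : Finset (Fin m)} (hS : S.Nonempty) :
    #{A ∈ blockFamily B (univ.biUnion T) | blocksIn B A = S} = 2 ^ ∑ i ∈ Sᶜ, #(T i) := by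
  have hT : ∀ i, T i ⊆ B i := fun i => (hTB i).subset
  have hdisj : Disjoint (S.biUnion B) (Sᶜ.biUnion T) := by
    rw [← sdiff_biUnion_eq hB hT]
    exact disjoint_sdiff
  rw [filter_blocksIn_eq hB hTB hTne hS, card_image_of_injOn, card_powerset,
    card_biUnion fun i _ j _ hij => (hB hij).mono (hT i) (hT j)]
  intro U₁ hU₁ U₂ hU₂ hU
  rw [coe_powerset, Set.mem_preimage, Set.mem_powerset_iff, coe_subset] at hU₁ hU₂
  rw [← union_sdiff_cancel_left (hdisj.mono_right hU₁),
    ← union_sdiff_cancel_left (hdisj.mono_right hU₂)]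
  exact congrArg (· \ S.biUnion B) hU

theorem card_filter_mem_blocksIn (hB : Pairwise (Disjoint on B)) (hTB : ∀ i, T i ⊂ B i)
    (hTne : ∀ i, (T i).Nonempty) (i : Fin m) :
    #{A ∈ blockFamily B (univ.biUnion T) | i ∈ blocksIn B A}
      = ∑ S ∈ univ.filter (i ∈ ·), 2 ^ ∑ j ∈ Sᶜ, #(T j) := by
  rw [card_eq_sum_card_fiberwise (f := blocksIn B) (t := univ.filter (i ∈ ·))
    fun A hA => mem_filter.mpr ⟨mem_univ _, (mem_filter.mp hA).2⟩]
  refine sum_congr rfl fun S hS => ?_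
  have hiS : i ∈ S := (mem_filter.mp hS).2
  rw [filter_filter, ← card_filter_blocksIn_eq hB hTB hTne ⟨i, hiS⟩]
  congr 1
  exact filter_congr fun A _ => ⟨And.right, fun h => ⟨h ▸ hiS, h⟩⟩

theorem mem_iff_mem_blocksIn (hB : Pairwise (Disjoint on B)) (hA : A ∈ blockFamily B D)
    {i : Fin m} {x : Fin n} (hxB : x ∈ B i) (hxD : x ∉ D) : x ∈ A ↔ i ∈ blocksIn B A := by
  conv_lhs => rw [← biUnion_blocksIn_union_inter hA]
  simp [hxD, mem_biUnion_iff_of_mem hB hxB]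

end BlockFamily

open BlockFamily Function in
theorem blockFamily_abundance_outside_T_general
    (k m s : ℕ) (hs : 0 < s) (hsk : s + 2 ≤ k)
    (B : Fin m → Finset (Fin (k * m)))
    (hBcard : ∀ i, (B i).card = k)
    (hBdisj : ∀ i j : Fin m, i ≠ j → Disjoint (B i) (B j))
    (hBcover : (Finset.univ : Finset (Fin m)).biUnion B = (Finset.univ : Finset (Fin (k * m))))
    (T : Fin m → Finset (Fin (k * m)))
    (hT : ∀ i, T i ⊆ B i) (hTcard : ∀ i, (T i).card = s)
    (N : ℕ → ℕ)
    (hN : ∀ j : ℕ, N j = ((blockFamily B ((univ : Finset (Fin m)).biUnion T)).filter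
      (fun A => (univ.filter (fun i : Fin m => B i ⊆ A)).card = j)).card)
    (p : ℕ → ℝ)
    (hp : ∀ j : ℕ, p j = (N j : ℝ) / ((blockFamily B ((univ : Finset (Fin m)).biUnion T)).card : ℝ)) :
    ∀ x : Fin (k * m), x ∉ (univ : Finset (Fin m)).biUnion T →
      abundance (blockFamily B ((univ : Finset (Fin m)).biUnion T)) x
        = (1 / (m : ℝ)) * ∑ j ∈ Finset.Icc 1 m, (j : ℝ) * p j := by
  intro x hx
  set F := blockFamily B (univ.biUnion T)
  have hB : Pairwise (Disjoint on B) := fun i j hij => hBdisj i j hij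
  have hTB : ∀ i, T i ⊂ B i := fun i => (hT i).ssubset_of_ne fun h => by
    have := congrArg card h
    rw [hTcard, hBcard] at this
    omega
  have hTne : ∀ i, (T i).Nonempty := fun i => card_pos.mp (hTcard i ▸ hs)
  obtain ⟨i₀, -, hxB⟩ := mem_biUnion.mp (hBcover ▸ mem_univ x)
  have hcount_eq : ∀ i, #{A ∈ F | i ∈ blocksIn B A} = #{A ∈ F | x ∈ A} := fun i => by
    rw [filter_congr fun A hA => mem_iff_mem_blocksIn hB hA hxB hx,
      card_filter_mem_blocksIn hB hTB hTne, card_filter_mem_blocksIn hB hTB hTne]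
    simp only [hTcard, sum_const, smul_eq_mul, card_compl]
    exact sum_filter_mem_card_eq (fun c => 2 ^ ((Fintype.card (Fin m) - c) * s)) i i₀
  have hN' : ∀ j, N j = #{A ∈ F | #(blocksIn B A) = j} := hN
  have hsum : ∑ j ∈ Icc 1 m, j * N j = m * #{A ∈ F | x ∈ A} := by
    simp only [hN']
    rw [sum_mul_card_filter_eq_sum fun A hA => mem_Icc.mpr ⟨card_pos.mpr (blocksIn_nonempty hA),
      (card_le_univ _).trans_eq (Fintype.card_fin m)⟩, sum_card_eq_of_card_filter_mem hcount_eq,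
      Fintype.card_fin]
  have hsum_real : ∑ j ∈ Icc 1 m, (j : ℝ) * N j = m * #{A ∈ F | x ∈ A} := by
    exact_mod_cast hsum
  have hm : (m : ℝ) ≠ 0 := Nat.cast_ne_zero.mpr i₀.pos.ne'
  simp only [abundance, hp, mul_div_assoc', ← sum_div, hsum_real]
  field_simp

/-- In the block construction, for every `x ∈ [n] ∖ T` the abundance of `x`
equals `(1/m) · Σ_{j=1}^{m} j · p_j`. -/
theorem blockFamily_abundance_outside_T
    (k m s : ℕ) (hk : 0 < k) (hm : 2 ≤ m) (hs : 0 < s) (hsk : s + 2 ≤ k)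
    (B : Fin m → Finset (Fin (k * m)))
    (hBcard : ∀ i, (B i).card = k)
    (hBdisj : ∀ i j : Fin m, i ≠ j → Disjoint (B i) (B j))
    (hBcover : (Finset.univ : Finset (Fin m)).biUnion B = (Finset.univ : Finset (Fin (k * m))))
    (T : Fin m → Finset (Fin (k * m)))
    (hT : ∀ i, T i ⊆ B i) (hTcard : ∀ i, (T i).card = s)
    (N : ℕ → ℕ)
    (hN : ∀ j : ℕ, N j = ((blockFamily B ((univ : Finset (Fin m)).biUnion T)).filter
      (fun A => (univ.filter (fun i : Fin m => B i ⊆ A)).card = j)).card)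
    (p : ℕ → ℝ)
    (hp : ∀ j : ℕ, p j = (N j : ℝ) / ((blockFamily B ((univ : Finset (Fin m)).biUnion T)).card : ℝ)) :
    ∀ x : Fin (k * m), x ∉ (univ : Finset (Fin m)).biUnion T →
      abundance (blockFamily B ((univ : Finset (Fin m)).biUnion T)) x
        = (1 / (m : ℝ)) * ∑ j ∈ Finset.Icc 1 m, (j : ℝ) * p j :=
  blockFamily_abundance_outside_T_general k m s hs hsk B hBcard hBdisj hBcover T hT hTcard N hN p hp
end

section
/- In the block construction, if additionally m · 2^{−s} ≤ 1/4, then for every x ∈ [n] ∖ T the abundance of x satisfies 1/m ≤ γ_x ≤ 2/m. -/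
/-!
A member of the family is a union of at least one whole block `B i` and of a subset of `T`
avoiding the chosen blocks. Equivalently, its trace on every block is either the whole block or
a subset of `T i`, and at least one trace is a whole block. As the blocks partition the ground
set, such sets are counted block by block: with `q = 2 ^ s` the family has `(q + 1) ^ m - q ^ m`
members, and those containing a point `x ∈ B i₀ \ T` are the ones whose trace on `B i₀` is the
whole block, `(q + 1) ^ (m - 1)` of them. The two bounds on the ratio then follow from
`m q ^ (m - 1) ≤ (q + 1) ^ m - q ^ m ≤ m (q + 1) ^ (m - 1)` and from Bernoulli's inequality
`(q + 1) ^ (m - 1) ≤ 2 q ^ (m - 1)`, valid once `q ≥ 2m`.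
-/

open Finset

open Function

section Blockwise

variable {ι α : Type*} [Fintype ι] [DecidableEq α] {B : ι → Finset α}

lemma biUnion_inter_of_pairwise_disjoint (hB : Pairwise (Disjoint on B)) {f : ι → Finset α}
    (hf : ∀ i, f i ⊆ B i) (i : ι) : univ.biUnion f ∩ B i = f i := by
  ext a
  simp only [mem_inter, mem_biUnion, mem_univ, true_and]
  refine ⟨fun ⟨⟨j, hj⟩, ha⟩ => ?_, fun ha => ⟨⟨i, ha⟩, hf i ha⟩⟩
  obtain rfl | hji := eq_or_ne j i
  · exact hj
  · exact absurd ha (disjoint_left.1 (hB hji) (hf j hj))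

variable [Fintype α]

def blockwise (B : ι → Finset α) (C : ι → Finset (Finset α)) : Finset (Finset α) :=
  {A | ∀ i, A ∩ B i ∈ C i}

lemma mem_blockwise {C : ι → Finset (Finset α)} {A : Finset α} :
    A ∈ blockwise B C ↔ ∀ i, A ∩ B i ∈ C i := by
  simp [blockwise]

lemma blockwise_mono {C D : ι → Finset (Finset α)} (h : ∀ i, C i ⊆ D i) :
    blockwise B C ⊆ blockwise B D := fun _ hA =>
  mem_blockwise.2 fun i => h i (mem_blockwise.1 hA i)

lemma card_blockwise [DecidableEq ι] (hB : Pairwise (Disjoint on B))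
    (hcover : univ.biUnion B = univ) {C : ι → Finset (Finset α)}
    (hC : ∀ i, ∀ X ∈ C i, X ⊆ B i) :
    #(blockwise B C) = ∏ i, #(C i) := by
  have hpiece : ∀ f ∈ Fintype.piFinset C, ∀ i, univ.biUnion f ∩ B i = f i := fun f hf =>
    biUnion_inter_of_pairwise_disjoint hB fun i => hC i _ (Fintype.mem_piFinset.1 hf i)
  rw [← Fintype.card_piFinset]
  refine card_nbij' (fun A i => A ∩ B i) (fun f => univ.biUnion f) ?_ ?_ ?_ ?_
  · intro A hA
    simpa using mem_blockwise.1 hA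
  · intro f hf
    simpa [mem_blockwise, hpiece f hf] using hf
  · intro A _
    simp [← inter_biUnion, hcover]
  · intro f hf
    exact funext (hpiece f hf)

end Blockwise

section InsertPowerset

variable {α : Type*} [DecidableEq α] {A B T X : Finset α}

lemma inter_mem_insert_powerset_iff :
    A ∩ B ∈ insert B T.powerset ↔ B ⊆ A ∨ A ∩ B ⊆ T := by
  rw [mem_insert, mem_powerset, inter_eq_right]

lemma subset_of_mem_insert_powerset (hT : T ⊆ B) (hX : X ∈ insert B T.powerset) : X ⊆ B := by
  rcases mem_insert.1 hX with rfl | hX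
  exacts [subset_rfl, (mem_powerset.1 hX).trans hT]

lemma card_insert_powerset (hBT : ¬ B ⊆ T) : #(insert B T.powerset) = 2 ^ #T + 1 := by
  rw [card_insert_of_notMem (hBT ∘ mem_powerset.1), card_powerset]

end InsertPowerset

lemma mem_image_sup_powerset_iff {α : Type*} [DecidableEq α] {G : Finset (Finset α)}
    {A : Finset α} :
    A ∈ (G.powerset.filter fun C => C.Nonempty).image (fun C => C.sup id) ↔
      (∃ g ∈ G, g ⊆ A) ∧ ∀ a ∈ A, ∃ g ∈ G, g ⊆ A ∧ a ∈ g := by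
  simp only [mem_image, mem_filter, mem_powerset]
  constructor
  · rintro ⟨C, ⟨hCG, g, hg⟩, rfl⟩
    refine ⟨⟨g, hCG hg, le_sup (f := id) hg⟩, fun a ha => ?_⟩
    obtain ⟨g, hg, hag⟩ := mem_sup.1 ha
    exact ⟨g, hCG hg, le_sup (f := id) hg, hag⟩
  · rintro ⟨⟨g, hg, hgA⟩, hcov⟩
    refine ⟨G.filter (· ⊆ A), ⟨filter_subset _ _, g, mem_filter.2 ⟨hg, hgA⟩⟩, ?_⟩
    refine le_antisymm (Finset.sup_le fun h hh => (mem_filter.1 hh).2) fun a ha => ?_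
    obtain ⟨h, hh, hhA, hah⟩ := hcov a ha
    exact mem_sup.2 ⟨h, mem_filter.2 ⟨hh, hhA⟩, hah⟩

section BlockFamily

variable {n m : ℕ} {B T : Fin m → Finset (Fin n)}

lemma mem_blockFamily_iff (hB : Pairwise (Disjoint on B)) (hcover : univ.biUnion B = univ)
    (hT : ∀ i, T i ⊆ B i) (hTne : ∀ i, (T i).Nonempty) {A : Finset (Fin n)} :
    A ∈ blockFamily B (univ.biUnion T) ↔ (∃ i, B i ⊆ A) ∧ ∀ i, B i ⊆ A ∨ A ∩ B i ⊆ T i := by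
  have hTB := biUnion_inter_of_pairwise_disjoint hB hT
  simp only [blockFamily, mem_image_sup_powerset_iff, exists_mem_image, mem_product, mem_univ,
    true_and, Prod.exists, union_subset_iff, singleton_subset_iff, mem_union, mem_singleton]
  constructor
  · rintro ⟨⟨i, -, -, hBi, -⟩, hcov⟩
    refine ⟨⟨i, hBi⟩, fun i => or_iff_not_imp_left.2 fun hBi a ha => ?_⟩
    obtain ⟨i', j, hj, ⟨hBi', -⟩, hai' | rfl⟩ := hcov a (mem_inter.1 ha).1
    · obtain rfl : i' = i := by
        by_contra hne
        exact disjoint_left.1 (hB hne) hai' (mem_inter.1 ha).2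
      exact absurd hBi' hBi
    · rw [← hTB i]
      exact mem_inter.2 ⟨hj, (mem_inter.1 ha).2⟩
  · rintro ⟨⟨i₀, hBi₀⟩, hblock⟩
    have hgen : ∀ i, B i ⊆ A → ∃ j ∈ univ.biUnion T, B i ⊆ A ∧ j ∈ A := fun i hBi => by
      obtain ⟨j, hj⟩ := hTne i
      exact ⟨j, mem_biUnion.2 ⟨i, mem_univ _, hj⟩, hBi, hBi (hT i hj)⟩
    obtain ⟨j₀, hj₀, hgen₀⟩ := hgen i₀ hBi₀
    refine ⟨⟨i₀, j₀, hj₀, hgen₀⟩, fun a ha => ?_⟩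
    obtain ⟨i, -, hai⟩ := mem_biUnion.1 (hcover ▸ mem_univ a)
    rcases hblock i with hBi | hAT
    · obtain ⟨j, hj, hgenj⟩ := hgen i hBi
      exact ⟨i, j, hj, hgenj, Or.inl hai⟩
    · have haT : a ∈ T i := hAT (mem_inter.2 ⟨ha, hai⟩)
      exact ⟨i₀, a, mem_biUnion.2 ⟨i, mem_univ _, haT⟩, ⟨hBi₀, ha⟩, Or.inr rfl⟩

lemma card_blockFamily_add_prod (hB : Pairwise (Disjoint on B))
    (hcover : univ.biUnion B = univ) (hT : ∀ i, T i ⊆ B i) (hTne : ∀ i, (T i).Nonempty)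
    (hBT : ∀ i, ¬ B i ⊆ T i) :
    #(blockFamily B (univ.biUnion T)) + ∏ i, 2 ^ #(T i) = ∏ i, (2 ^ #(T i) + 1) := by
  have hsub : blockwise B (fun i => (T i).powerset) ⊆
      blockwise B (fun i => insert (B i) (T i).powerset) :=
    blockwise_mono fun i => subset_insert _ _
  have hF : blockFamily B (univ.biUnion T) =
      blockwise B (fun i => insert (B i) (T i).powerset) \
        blockwise B (fun i => (T i).powerset) := by
    ext A
    simp only [mem_blockFamily_iff hB hcover hT hTne, mem_sdiff, mem_blockwise,
      inter_mem_insert_powerset_iff, mem_powerset, not_forall]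
    have hfull : ∀ i, B i ⊆ A → ¬ A ∩ B i ⊆ T i := fun i h => by
      rw [inter_eq_right.2 h]
      exact hBT i
    exact ⟨fun ⟨⟨i, hi⟩, h⟩ => ⟨h, i, hfull i hi⟩,
      fun ⟨h, i, hi⟩ => ⟨⟨i, (h i).resolve_right hi⟩, h⟩⟩
  have hcard_none : #(blockwise B fun i => (T i).powerset) = ∏ i, 2 ^ #(T i) := by
    rw [card_blockwise hB hcover fun i _ hX => (mem_powerset.1 hX).trans (hT i)]
    simp only [card_powerset]
  have hcard_all :
      #(blockwise B fun i => insert (B i) (T i).powerset) = ∏ i, (2 ^ #(T i) + 1) := by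
    rw [card_blockwise hB hcover fun i _ => subset_of_mem_insert_powerset (hT i)]
    simp only [card_insert_powerset (hBT _)]
  rw [hF, ← hcard_none, ← hcard_all, card_sdiff_add_card_eq_card hsub]

lemma card_filter_mem_blockFamily (hB : Pairwise (Disjoint on B))
    (hcover : univ.biUnion B = univ) (hT : ∀ i, T i ⊆ B i) (hTne : ∀ i, (T i).Nonempty)
    (hBT : ∀ i, ¬ B i ⊆ T i) {i₀ : Fin m} {x : Fin n} (hxB : x ∈ B i₀) (hxT : x ∉ T i₀) :
    #{A ∈ blockFamily B (univ.biUnion T) | x ∈ A} = ∏ i ∈ univ.erase i₀, (2 ^ #(T i) + 1) := by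
  set C := update (fun i => insert (B i) (T i).powerset) i₀ {B i₀}
  have hC : ∀ i, ∀ X ∈ C i, X ⊆ B i := fun i X hX => by
    rcases eq_or_ne i i₀ with rfl | hi
    · rw [show X = B i from by simpa [C] using hX]
    · exact subset_of_mem_insert_powerset (hT i) (by simpa [C, hi] using hX)
  have hF : {A ∈ blockFamily B (univ.biUnion T) | x ∈ A} = blockwise B C := by
    ext A
    simp only [mem_filter, mem_blockFamily_iff hB hcover hT hTne, mem_blockwise]
    constructor
    · rintro ⟨⟨-, h⟩, hx⟩ i
      rcases eq_or_ne i i₀ with rfl | hi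
      · simpa [C, inter_eq_right] using
          (h i).resolve_right fun h' => hxT (h' (mem_inter.2 ⟨hx, hxB⟩))
      · simpa [C, hi, inter_mem_insert_powerset_iff] using h i
    · intro h
      have hB₀ : B i₀ ⊆ A := by simpa [C, inter_eq_right] using h i₀
      refine ⟨⟨⟨i₀, hB₀⟩, fun i => ?_⟩, hB₀ hxB⟩
      rcases eq_or_ne i i₀ with rfl | hi
      · exact Or.inl hB₀
      · simpa [C, hi, inter_mem_insert_powerset_iff] using h i
  rw [hF, card_blockwise hB hcover hC, ← mul_prod_erase _ _ (mem_univ i₀)]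
  simp only [C, update_self, card_singleton, one_mul]
  exact prod_congr rfl fun i hi => by
    rw [update_of_ne (ne_of_mem_erase hi), card_insert_powerset (hBT i)]

end BlockFamily

lemma mul_pow_le_add_one_pow_sub_pow {Q : ℝ} (hQ : 0 ≤ Q) (m : ℕ) :
    m * Q ^ (m - 1) ≤ (Q + 1) ^ m - Q ^ m := by
  have := pow_add_mul_le_add_pow hQ (by linarith : 0 ≤ 2 * Q + 1) m
  linarith

lemma add_one_pow_sub_pow_le_mul_pow {Q : ℝ} (hQ : 0 ≤ Q) (m : ℕ) :
    (Q + 1) ^ m - Q ^ m ≤ m * (Q + 1) ^ (m - 1) := by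
  have h := abs_pow_sub_pow_le (Q + 1) Q m
  rw [add_sub_cancel_left, abs_one, one_mul, abs_of_nonneg hQ,
    abs_of_nonneg (by linarith : 0 ≤ Q + 1), max_eq_left (by linarith)] at h
  exact (le_abs_self _).trans h

lemma add_one_pow_le_two_mul_pow {Q : ℝ} {n : ℕ} (hQ : 2 * n ≤ Q) :
    (Q + 1) ^ n ≤ 2 * Q ^ n := by
  have hQ0 : 0 ≤ Q := le_trans (by positivity) hQ
  have hQ1 : 0 < Q + 1 := by linarith
  have hbern := one_add_mul_le_pow (a := -1 / (Q + 1))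
    (by rw [neg_div, neg_le_neg_iff, div_le_iff₀ hQ1]; linarith) n
  have hhalf : 1 / 2 ≤ (Q / (Q + 1)) ^ n := by
    have : (1 : ℝ) + -1 / (Q + 1) = Q / (Q + 1) := by field_simp; ring
    rw [this] at hbern
    have : (n : ℝ) * (-1 / (Q + 1)) ≥ - (1 / 2) := by
      rw [mul_div_assoc', ge_iff_le, le_div_iff₀ hQ1]; linarith
    linarith
  rw [div_pow, le_div_iff₀ (by positivity)] at hhalf
  linarith

lemma one_div_le_add_one_pow_div {m : ℕ} (hm : 0 < m) {Q : ℝ} (hQ : 0 ≤ Q) :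
    1 / (m : ℝ) ≤ (Q + 1) ^ (m - 1) / ((Q + 1) ^ m - Q ^ m) := by
  have hpos : 0 < (Q + 1) ^ m - Q ^ m :=
    sub_pos.2 (pow_lt_pow_left₀ (by linarith) hQ hm.ne')
  rw [div_le_div_iff₀ (by positivity) hpos]
  linarith [add_one_pow_sub_pow_le_mul_pow hQ m]

lemma add_one_pow_div_le_two_div {m : ℕ} (hm : 0 < m) {Q : ℝ} (hQ : 2 * (m : ℝ) ≤ Q) :
    (Q + 1) ^ (m - 1) / ((Q + 1) ^ m - Q ^ m) ≤ 2 / (m : ℝ) := by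
  have hm' : (0 : ℝ) < m := by exact_mod_cast hm
  have hQ0 : 0 ≤ Q := by linarith
  have hpos : 0 < (Q + 1) ^ m - Q ^ m :=
    sub_pos.2 (pow_lt_pow_left₀ (by linarith) hQ0 hm.ne')
  have hQm : 2 * ((m - 1 : ℕ) : ℝ) ≤ Q := by
    have : ((m - 1 : ℕ) : ℝ) ≤ m := by exact_mod_cast m.sub_le 1
    linarith
  rw [div_le_div_iff₀ hpos hm']
  nlinarith [add_one_pow_le_two_mul_pow hQm, mul_pow_le_add_one_pow_sub_pow hQ0 m]

theorem blockFamily_abundance_outside_T_bounds_general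
    (k m s : ℕ) (hs : 0 < s) (hsk : s + 2 ≤ k)
    (B : Fin m → Finset (Fin (k * m)))
    (hBcard : ∀ i, (B i).card = k)
    (hBdisj : ∀ i j : Fin m, i ≠ j → Disjoint (B i) (B j))
    (hBcover : (Finset.univ : Finset (Fin m)).biUnion B = (Finset.univ : Finset (Fin (k * m))))
    (T : Fin m → Finset (Fin (k * m)))
    (hT : ∀ i, T i ⊆ B i) (hTcard : ∀ i, (T i).card = s)
    (hτ : (m : ℝ) * (2 : ℝ) ^ (-(s : ℤ)) ≤ 1 / 4) :
    ∀ x : Fin (k * m), x ∉ (univ : Finset (Fin m)).biUnion T →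
      1 / (m : ℝ) ≤ abundance (blockFamily B ((univ : Finset (Fin m)).biUnion T)) x ∧
      abundance (blockFamily B ((univ : Finset (Fin m)).biUnion T)) x ≤ 2 / (m : ℝ) := by
  intro x hx
  obtain ⟨i₀, -, hxB⟩ := mem_biUnion.1 (hBcover ▸ mem_univ x)
  have hB : Pairwise (Disjoint on B) := fun i j => hBdisj i j
  have hTne : ∀ i, (T i).Nonempty := fun i => card_pos.1 (hTcard i ▸ hs)
  have hBT : ∀ i, ¬ B i ⊆ T i := fun i h => by
    have := card_le_card h
    rw [hBcard, hTcard] at this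
    omega
  have hxT : x ∉ T i₀ := fun h => hx (mem_biUnion.2 ⟨i₀, mem_univ _, h⟩)
  have hcard := card_blockFamily_add_prod hB hBcover hT hTne hBT
  have hcard_x := card_filter_mem_blockFamily hB hBcover hT hTne hBT hxB hxT
  simp only [hTcard, prod_const, card_univ, Fintype.card_fin,
    card_erase_of_mem (mem_univ i₀)] at hcard hcard_x
  have hQ : 2 * (m : ℝ) ≤ 2 ^ s := by
    rw [zpow_neg, zpow_natCast, ← div_eq_mul_inv, div_le_iff₀ (by positivity)] at hτ
    linarith
  have hcardR : (#(blockFamily B (univ.biUnion T)) : ℝ) = (2 ^ s + 1) ^ m - (2 ^ s) ^ m := by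
    rw [eq_sub_iff_add_eq]
    exact_mod_cast hcard
  rw [abundance, hcard_x, hcardR]
  push_cast
  exact ⟨one_div_le_add_one_pow_div i₀.pos (by positivity), add_one_pow_div_le_two_div i₀.pos hQ⟩

/-- In the block construction, if `m · 2^{−s} ≤ 1/4`, then for every
`x ∈ [n] ∖ T` the abundance of `x` satisfies `1/m ≤ γ_x ≤ 2/m`. -/
theorem blockFamily_abundance_outside_T_bounds
    (k m s : ℕ) (hk : 0 < k) (hm : 2 ≤ m) (hs : 0 < s) (hsk : s + 2 ≤ k)
    (B : Fin m → Finset (Fin (k * m)))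
    (hBcard : ∀ i, (B i).card = k)
    (hBdisj : ∀ i j : Fin m, i ≠ j → Disjoint (B i) (B j))
    (hBcover : (Finset.univ : Finset (Fin m)).biUnion B = (Finset.univ : Finset (Fin (k * m))))
    (T : Fin m → Finset (Fin (k * m)))
    (hT : ∀ i, T i ⊆ B i) (hTcard : ∀ i, (T i).card = s)
    (hτ : (m : ℝ) * (2 : ℝ) ^ (-(s : ℤ)) ≤ 1 / 4) :
    ∀ x : Fin (k * m), x ∉ (univ : Finset (Fin m)).biUnion T →
      1 / (m : ℝ) ≤ abundance (blockFamily B ((univ : Finset (Fin m)).biUnion T)) x ∧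
      abundance (blockFamily B ((univ : Finset (Fin m)).biUnion T)) x ≤ 2 / (m : ℝ) :=
  blockFamily_abundance_outside_T_bounds_general k m s hs hsk B hBcard hBdisj hBcover T hT hTcard hτ
end

section
/- In the block construction, for every x ∈ T the abundance of x satisfies 1/2 ≤ γ_x ≤ 1. -/
open Finset

/-!
Adding `x ∈ T` to a member `A` of the block family stays inside the family: `A` contains a
generator `B i ∪ {j}`, so `insert x A = A ∪ (B i ∪ {x})` is again a union of generators. Hence
`A ↦ insert x A` injects the members avoiding `x` into those containing `x`, so at least half of
the family contains `x`.
-/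

section Abundance

variable {α : Type*} [DecidableEq α]

theorem card_filter_notMem_le_card_filter_mem_of_insert_mem {F : Finset (Finset α)} {x : α}
    (hins : ∀ A ∈ F, insert x A ∈ F) :
    #{A ∈ F | x ∉ A} ≤ #{A ∈ F | x ∈ A} := by
  refine card_le_card_of_injOn (insert x) (fun A hA => ?_) (fun A hA A' hA' h => ?_)
  · simp only [coe_filter, Set.mem_ofPred_eq] at hA ⊢
    exact ⟨hins A hA.1, mem_insert_self x A⟩
  · simp only [coe_filter, Set.mem_ofPred_eq] at hA hA'
    rw [← erase_insert hA.2, ← erase_insert hA'.2]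
    exact congrArg (erase · x) h

theorem one_half_le_abundance_of_insert_mem {F : Finset (Finset α)} {x : α} (hF : F.Nonempty)
    (hins : ∀ A ∈ F, insert x A ∈ F) : 1 / 2 ≤ abundance F x := by
  have hsplit := card_filter_add_card_filter_not (s := F) (fun A => x ∈ A)
  have hle := card_filter_notMem_le_card_filter_mem_of_insert_mem hins
  have hpos : (0 : ℝ) < #F := mod_cast hF.card_pos
  rw [abundance, le_div_iff₀ hpos]
  have : (#F : ℝ) ≤ 2 * #{A ∈ F | x ∈ A} := mod_cast (by omega)
  linarith

end Abundance

section UnionClosure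

variable {α : Type*} [DecidableEq α]

def unionClosure (G : Finset (Finset α)) : Finset (Finset α) :=
  (G.powerset.filter (fun C => C.Nonempty)).image (fun C => C.sup id)

variable {G : Finset (Finset α)}

theorem mem_unionClosure {A : Finset α} :
    A ∈ unionClosure G ↔ ∃ C ⊆ G, C.Nonempty ∧ C.sup id = A := by
  simp [unionClosure, and_assoc]

theorem mem_unionClosure_of_mem {g : Finset α} (hg : g ∈ G) : g ∈ unionClosure G :=
  mem_unionClosure.2 ⟨{g}, singleton_subset_iff.2 hg, singleton_nonempty g, sup_singleton⟩

theorem union_mem_unionClosure {A g : Finset α} (hA : A ∈ unionClosure G) (hg : g ∈ G) :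
    A ∪ g ∈ unionClosure G := by
  obtain ⟨C, hCG, -, rfl⟩ := mem_unionClosure.1 hA
  refine mem_unionClosure.2 ⟨insert g C, insert_subset hg hCG, insert_nonempty g C, ?_⟩
  rw [sup_insert, id, sup_eq_union, union_comm]

theorem exists_subset_of_mem_unionClosure {A : Finset α} (hA : A ∈ unionClosure G) :
    ∃ g ∈ G, g ⊆ A := by
  obtain ⟨C, hCG, ⟨g, hg⟩, rfl⟩ := mem_unionClosure.1 hA
  exact ⟨g, hCG hg, le_sup (f := id) hg⟩

end UnionClosure

section BlockFamily

variable {n m : ℕ} {B : Fin m → Finset (Fin n)} {T : Finset (Fin n)}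

def blockGenerators (B : Fin m → Finset (Fin n)) (T : Finset (Fin n)) : Finset (Finset (Fin n)) :=
  ((univ : Finset (Fin m)) ×ˢ T).image (fun p => B p.1 ∪ {p.2})

theorem blockFamily_eq_unionClosure : blockFamily B T = unionClosure (blockGenerators B T) :=
  rfl

theorem union_singleton_mem_blockGenerators (i : Fin m) {x : Fin n} (hx : x ∈ T) :
    B i ∪ {x} ∈ blockGenerators B T :=
  mem_image.2 ⟨(i, x), mem_product.2 ⟨mem_univ i, hx⟩, rfl⟩

theorem union_singleton_mem_blockFamily (i : Fin m) {x : Fin n} (hx : x ∈ T) :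
    B i ∪ {x} ∈ blockFamily B T :=
  mem_unionClosure_of_mem (union_singleton_mem_blockGenerators i hx)

theorem insert_mem_blockFamily {A : Finset (Fin n)} (hA : A ∈ blockFamily B T) {x : Fin n}
    (hx : x ∈ T) : insert x A ∈ blockFamily B T := by
  rw [blockFamily_eq_unionClosure] at hA ⊢
  obtain ⟨g, hg, hgA⟩ := exists_subset_of_mem_unionClosure hA
  obtain ⟨⟨i, j⟩, -, rfl⟩ := mem_image.1 hg
  have hBA : B i ⊆ A := subset_union_left.trans hgA
  have hinsert : A ∪ (B i ∪ {x}) = insert x A := by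
    rw [← union_assoc, union_eq_left.2 hBA, union_comm, singleton_union]
  exact hinsert ▸ union_mem_unionClosure hA (union_singleton_mem_blockGenerators i hx)

end BlockFamily

theorem blockFamily_abundance_in_T_general
    (k m : ℕ)
    (B : Fin m → Finset (Fin (k * m)))
    (T : Fin m → Finset (Fin (k * m)))
    :
    ∀ x ∈ (univ : Finset (Fin m)).biUnion T,
      1 / 2 ≤ abundance (blockFamily B ((univ : Finset (Fin m)).biUnion T)) x ∧
      abundance (blockFamily B ((univ : Finset (Fin m)).biUnion T)) x ≤ 1 := by
  intro x hx
  obtain ⟨i, -, -⟩ := mem_biUnion.1 hx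
  refine ⟨one_half_le_abundance_of_insert_mem ?_ fun A hA => insert_mem_blockFamily hA hx,
    abundance_le_one _ x⟩
  exact ⟨_, union_singleton_mem_blockFamily i hx⟩

/-- In the block construction, for every `x ∈ T` the abundance of `x`
satisfies `1/2 ≤ γ_x ≤ 1`. -/
theorem blockFamily_abundance_in_T
    (k m s : ℕ) (hk : 0 < k) (hm : 2 ≤ m) (hs : 0 < s) (hsk : s + 2 ≤ k)
    (B : Fin m → Finset (Fin (k * m)))
    (hBcard : ∀ i, (B i).card = k)
    (hBdisj : ∀ i j : Fin m, i ≠ j → Disjoint (B i) (B j))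
    (hBcover : (Finset.univ : Finset (Fin m)).biUnion B = (Finset.univ : Finset (Fin (k * m))))
    (T : Fin m → Finset (Fin (k * m)))
    (hT : ∀ i, T i ⊆ B i) (hTcard : ∀ i, (T i).card = s)
    :
    ∀ x ∈ (univ : Finset (Fin m)).biUnion T,
      1 / 2 ≤ abundance (blockFamily B ((univ : Finset (Fin m)).biUnion T)) x ∧
      abundance (blockFamily B ((univ : Finset (Fin m)).biUnion T)) x ≤ 1 :=
  blockFamily_abundance_in_T_general k m B T
end

section
/- In the block construction, the enlarged family F' = F ∪ { [n] ∖ {j} : j ∈ [n] } is union-closed and separates the points of [n]. -/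
/-!
`F` is the sup-closure of its generators `B i ∪ {t}`, hence union-closed, and since the blocks
cover `[n]`, the union of one generator per block is `[n] ∈ F`. A co-singleton `[n] ∖ {j}` united
with any set is `[n]` or itself, so adding the co-singletons to a union-closed family containing
`[n]` keeps it union-closed; and `[n] ∖ {j}` separates `j` from every other point.
-/

open Finset

section Cosingletons

variable {α : Type*} [DecidableEq α] [Fintype α]

theorem union_erase_univ_eq (A : Finset α) (j : α) :
    A ∪ univ.erase j = if j ∈ A then univ else univ.erase j := by
  ext x
  by_cases hx : x = j <;> split_ifs <;> simp_all

theorem UnionClosed.union_image_erase {F : Finset (Finset α)} (hF : UnionClosed F)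
    (huniv : univ ∈ F) : UnionClosed (F ∪ univ.image fun j => univ.erase j) := by
  have union_erase_mem (A : Finset α) (j : α) :
      A ∪ univ.erase j ∈ F ∪ univ.image fun j => univ.erase j := by
    rw [union_erase_univ_eq]
    split_ifs
    · exact mem_union_left _ huniv
    · exact mem_union_right _ (mem_image_of_mem _ (mem_univ j))
  intro A hA C hC
  rcases mem_union.1 hC with hC | hC
  · rcases mem_union.1 hA with hA | hA
    · exact mem_union_left _ (hF A hA C hC)
    · obtain ⟨j, -, rfl⟩ := mem_image.1 hA
      rw [union_comm (univ.erase j)]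
      exact union_erase_mem C j
  · obtain ⟨j, -, rfl⟩ := mem_image.1 hC
    exact union_erase_mem A j

end Cosingletons

theorem erase_inter_pair_eq_singleton {α : Type*} [DecidableEq α] {i j : α} {s : Finset α}
    (hi : i ∈ s) (hij : i ≠ j) : s.erase j ∩ {i, j} = {i} := by
  ext x
  grind

theorem unionClosed_iff_supClosed {α : Type*} [DecidableEq α] {F : Finset (Finset α)} :
    UnionClosed F ↔ SupClosed (F : Set (Finset α)) := Iff.rfl

section BlockFamily

variable {n m : ℕ} (B : Fin m → Finset (Fin n)) (T : Finset (Fin n))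

theorem coe_blockFamily :
    (blockFamily B T : Set (Finset (Fin n))) =
      supClosure ↑(((univ : Finset (Fin m)) ×ˢ T).image fun p => B p.1 ∪ {p.2}) := by
  unfold blockFamily
  generalize ((univ : Finset (Fin m)) ×ˢ T).image (fun p => B p.1 ∪ {p.2}) = G
  ext A
  change _ ↔ ∃ C : Finset (Finset (Fin n)), ∃ hC : C.Nonempty, _ ∧ C.sup' hC id = A
  simp only [coe_image, coe_filter, mem_powerset, Set.mem_image, Set.mem_ofPred_eq, coe_subset,
    sup'_eq_sup]
  exact ⟨fun ⟨C, ⟨hCG, hC⟩, hA⟩ => ⟨C, hC, hCG, hA⟩, fun ⟨C, hC, hCG, hA⟩ => ⟨C, ⟨hCG, hC⟩, hA⟩⟩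

theorem unionClosed_blockFamily : UnionClosed (blockFamily B T) := by
  rw [unionClosed_iff_supClosed, coe_blockFamily]
  exact supClosed_supClosure

theorem univ_mem_blockFamily (hB : (univ : Finset (Fin m)).biUnion B = univ) (hT : T.Nonempty) :
    univ ∈ blockFamily B T := by
  obtain ⟨t, ht⟩ := hT
  have hcover (x : Fin n) : ∃ i, x ∈ B i := by
    simpa using hB.ge (mem_univ x)
  obtain ⟨i₀, -⟩ := hcover t
  have hsup : (univ.sup' (univ_nonempty_iff.2 ⟨i₀⟩) fun i => B i ∪ {t}) = univ :=
    eq_univ_of_forall fun x => by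
      obtain ⟨i, hi⟩ := hcover x
      exact (mem_sup' _).2 ⟨i, mem_univ i, mem_union_left _ hi⟩
  rw [← mem_coe, coe_blockFamily, ← hsup]
  exact finsetSup'_mem_supClosure _ fun i _ => mem_image_of_mem _ (mk_mem_product (mem_univ i) ht)

end BlockFamily

theorem blockFamily_enlarged_unionClosed_separating_general
    (k m s : ℕ) (hm : 2 ≤ m) (hs : 0 < s)
    (B : Fin m → Finset (Fin (k * m)))
    (hBcover : (Finset.univ : Finset (Fin m)).biUnion B = (Finset.univ : Finset (Fin (k * m))))
    (T : Fin m → Finset (Fin (k * m)))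
    (hTcard : ∀ i, (T i).card = s)
    :
    UnionClosed (blockFamily B ((univ : Finset (Fin m)).biUnion T) ∪
        (univ : Finset (Fin (k * m))).image (fun j => univ.erase j)) ∧
    ∀ i j : Fin (k * m), i ≠ j →
      ∃ A ∈ blockFamily B ((univ : Finset (Fin m)).biUnion T) ∪
          (univ : Finset (Fin (k * m))).image (fun j => univ.erase j),
        (A ∩ {i, j}).card = 1 := by
  have hT : ((univ : Finset (Fin m)).biUnion T).Nonempty :=
    (card_pos.1 ((hTcard ⟨0, by omega⟩).symm ▸ hs)).mono (subset_biUnion_of_mem T (mem_univ _))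
  refine ⟨(unionClosed_blockFamily B _).union_image_erase (univ_mem_blockFamily B _ hBcover hT),
    fun i j hij => ?_⟩
  refine ⟨univ.erase j, mem_union_right _ (mem_image_of_mem _ (mem_univ j)), ?_⟩
  rw [erase_inter_pair_eq_singleton (mem_univ i) hij, card_singleton]

/-- In the block construction, the enlarged family
`F' = F ∪ {[n] ∖ {j} : j ∈ [n]}` is union-closed and separates the points of `[n]`. -/
theorem blockFamily_enlarged_unionClosed_separating
    (k m s : ℕ) (hk : 0 < k) (hm : 2 ≤ m) (hs : 0 < s) (hsk : s + 2 ≤ k)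
    (B : Fin m → Finset (Fin (k * m)))
    (hBcard : ∀ i, (B i).card = k)
    (hBdisj : ∀ i j : Fin m, i ≠ j → Disjoint (B i) (B j))
    (hBcover : (Finset.univ : Finset (Fin m)).biUnion B = (Finset.univ : Finset (Fin (k * m))))
    (T : Fin m → Finset (Fin (k * m)))
    (hT : ∀ i, T i ⊆ B i) (hTcard : ∀ i, (T i).card = s)
    :
    UnionClosed (blockFamily B ((univ : Finset (Fin m)).biUnion T) ∪
        (univ : Finset (Fin (k * m))).image (fun j => univ.erase j)) ∧
    ∀ i j : Fin (k * m), i ≠ j →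
      ∃ A ∈ blockFamily B ((univ : Finset (Fin m)).biUnion T) ∪
          (univ : Finset (Fin (k * m))).image (fun j => univ.erase j),
        (A ∩ {i, j}).card = 1 :=
  blockFamily_enlarged_unionClosed_separating_general k m s hm hs B hBcover T hTcard
end
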